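/- Let q be a prime power and let v ≥ 2, 0 ≤ k ≤ v−1, and d be integers. Then A_q(v,d;k) ≤ ⌊ (q^v−1)/(q^{v−k}−1) · A_q(v−1,d;k) ⌋, where ⌊·⌋ denotes the floor of the rational number. -/

import Mathlib

/-!
Double count the pairs `(X, φ)` of a codeword `X` of an optimal code and a nonzero linear
functional `φ` with `X ≤ ker φ`. A `k`-dimensional codeword is killed exactly by the
`q^(v-k) - 1` nonzero elements of its dual annihilator, while the codewords inside a hyperplane
`ker φ` form a constant dimension code in a `(v-1)`-dimensional space, so there are at most
`A_q(v-1,d;k)` of them. With `q^v - 1` nonzero functionals this gives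
`A_q(v,d;k) (q^(v-k) - 1) ≤ (q^v - 1) A_q(v-1,d;k)`.
-/

open scoped Classical

/-- The subspace distance `d_S(X,Y) = dim(X+Y) - dim(X∩Y)` between two subspaces. -/
noncomputable def subspaceDist {F V : Type*} [Field F] [AddCommGroup V] [Module F V]
    (X Y : Submodule F V) : ℕ :=
  Module.finrank F ↥(X ⊔ Y) - Module.finrank F ↥(X ⊓ Y)

/-- `C` is a subspace code with minimum subspace distance at least `d`. -/
def IsSubspaceCode {F V : Type*} [Field F] [AddCommGroup V] [Module F V]
    (d : ℕ) (C : Finset (Submodule F V)) : Prop :=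
  ∀ X ∈ C, ∀ Y ∈ C, X ≠ Y → d ≤ subspaceDist X Y

/-- `A_q(v,d)`: the maximum cardinality of a subspace code in `F^v` (where `#F = q`)
with minimum subspace distance at least `d`. -/
noncomputable def maxCode (F : Type*) [Field F] [Fintype F] (v d : ℕ) : ℕ :=
  sSup {n | ∃ C : Finset (Submodule F (Fin v → F)), IsSubspaceCode d C ∧ C.card = n}

/-- `A_q(v,d;k)`: the maximum cardinality of a constant dimension code in `F^v`
(where `#F = q`) with minimum subspace distance at least `d` and all codewords of
dimension `k`. -/
noncomputable def maxCodeDim (F : Type*) [Field F] [Fintype F] (v d k : ℕ) : ℕ :=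
  sSup {n | ∃ C : Finset (Submodule F (Fin v → F)), IsSubspaceCode d C ∧
    (∀ X ∈ C, Module.finrank F ↥X = k) ∧ C.card = n}

/-- `[x]_q = (q^x - 1)/(q - 1)`, the number of points of `PG(F_q^x)`. -/
def gaussNum (q x : ℕ) : ℕ := ∑ i ∈ Finset.range x, q ^ i

open Module Submodule Finset

section SubspaceCode

variable {F V W : Type*} [Field F] [AddCommGroup V] [Module F V] [AddCommGroup W] [Module F W]

lemma finrank_map_of_injective {f : V →ₗ[F] W} (hf : Function.Injective f)
    (X : Submodule F V) : finrank F (X.map f) = finrank F X :=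
  (equivMapOfInjective f hf X).finrank_eq.symm

lemma subspaceDist_map_of_injective {f : V →ₗ[F] W} (hf : Function.Injective f)
    (X Y : Submodule F V) : subspaceDist (X.map f) (Y.map f) = subspaceDist X Y := by
  rw [subspaceDist, subspaceDist, ← Submodule.map_sup, ← map_inf f hf,
    finrank_map_of_injective hf, finrank_map_of_injective hf]

lemma IsSubspaceCode.mono {d : ℕ} {C C' : Finset (Submodule F V)} (hC : IsSubspaceCode d C)
    (h : C' ⊆ C) : IsSubspaceCode d C' :=
  fun X hX Y hY => hC X (h hX) Y (h hY)

end SubspaceCode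

section MaxCodeDim

variable (F : Type*) [Field F] [Fintype F] (v d k : ℕ)

lemma bddAbove_card_constDimCodes :
    BddAbove {n | ∃ C : Finset (Submodule F (Fin v → F)), IsSubspaceCode d C ∧
      (∀ X ∈ C, finrank F X = k) ∧ C.card = n} := by
  have : Fintype (Submodule F (Fin v → F)) := Fintype.ofFinite _
  refine ⟨Fintype.card (Submodule F (Fin v → F)), ?_⟩
  rintro n ⟨C, -, -, rfl⟩
  exact card_le_univ C

lemma card_le_maxCodeDim {C : Finset (Submodule F (Fin v → F))} (hC : IsSubspaceCode d C)
    (hCk : ∀ X ∈ C, finrank F X = k) : C.card ≤ maxCodeDim F v d k :=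
  le_csSup (bddAbove_card_constDimCodes F v d k) ⟨C, hC, hCk, rfl⟩

lemma exists_card_eq_maxCodeDim :
    ∃ C : Finset (Submodule F (Fin v → F)), IsSubspaceCode d C ∧
      (∀ X ∈ C, finrank F X = k) ∧ C.card = maxCodeDim F v d k := by
  refine Nat.sSup_mem ?_ (bddAbove_card_constDimCodes F v d k)
  exact ⟨0, ∅, by simp [IsSubspaceCode], by simp, rfl⟩

variable {F v d k} {V : Type*} [AddCommGroup V] [Module F V]

lemma card_le_maxCodeDim_of_le_range {m : ℕ} {f : (Fin m → F) →ₗ[F] V}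
    (hf : Function.Injective f) {C : Finset (Submodule F V)} (hC : IsSubspaceCode d C)
    (hCk : ∀ X ∈ C, finrank F X = k) (hCf : ∀ X ∈ C, X ≤ LinearMap.range f) :
    C.card ≤ maxCodeDim F m d k := by
  have hmap : ∀ X ∈ C, (X.comap f).map f = X := fun X hX =>
    map_comap_eq_of_le (hCf X hX)
  have hinj : Set.InjOn (comap f) C := fun X hX Y hY hXY => by
    rw [← hmap X hX, ← hmap Y hY, hXY]
  rw [← card_image_of_injOn hinj]
  apply card_le_maxCodeDim
  · simp only [IsSubspaceCode, mem_image]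
    rintro _ ⟨X, hX, rfl⟩ _ ⟨Y, hY, rfl⟩ hXY
    rw [← subspaceDist_map_of_injective hf, hmap X hX, hmap Y hY]
    exact hC X hX Y hY fun h => hXY (congrArg _ h)
  · simp only [mem_image]
    rintro _ ⟨X, hX, rfl⟩
    rw [← finrank_map_of_injective hf, hmap X hX, hCk X hX]

lemma card_le_maxCodeDim_of_le [FiniteDimensional F V] {m : ℕ} {H : Submodule F V}
    (hH : finrank F H = m) {C : Finset (Submodule F V)} (hC : IsSubspaceCode d C)
    (hCk : ∀ X ∈ C, finrank F X = k) (hCH : ∀ X ∈ C, X ≤ H) :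
    C.card ≤ maxCodeDim F m d k := by
  obtain ⟨e⟩ : Nonempty ((Fin m → F) ≃ₗ[F] H) :=
    FiniteDimensional.nonempty_linearEquiv_of_finrank_eq (by simp [hH])
  refine card_le_maxCodeDim_of_le_range (f := H.subtype ∘ₗ e.toLinearMap)
    (H.injective_subtype.comp e.injective) hC hCk fun X hX => ?_
  rw [LinearMap.range_comp, LinearEquiv.range, Submodule.map_top, range_subtype]
  exact hCH X hX

end MaxCodeDim

section DoubleCounting

variable {F V : Type*} [Field F] [Fintype F] [AddCommGroup V] [Module F V]
  [FiniteDimensional F V] [Fintype (Dual F V)]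

lemma card_filter_le_ker (X : Submodule F V) :
    #{φ : Dual F V | X ≤ LinearMap.ker φ} = Fintype.card F ^ (finrank F V - finrank F X) := by
  have hmem : ∀ φ : Dual F V, X ≤ LinearMap.ker φ ↔ φ ∈ X.dualAnnihilator := fun φ =>
    (mem_dualAnnihilator φ).symm
  have hdim := Subspace.finrank_add_finrank_dualAnnihilator_eq X
  calc #{φ : Dual F V | X ≤ LinearMap.ker φ} = #{φ | φ ∈ X.dualAnnihilator} := by
        simp_rw [hmem]
    _ = Fintype.card X.dualAnnihilator := (Fintype.card_subtype _).symm
    _ = Fintype.card F ^ (finrank F V - finrank F X) := by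
        rw [card_eq_pow_finrank (K := F)]
        congr 1
        omega

lemma card_mul_le_maxCodeDim {d k n : ℕ} (hV : finrank F V = n) {C : Finset (Submodule F V)}
    (hC : IsSubspaceCode d C) (hCk : ∀ X ∈ C, finrank F X = k) :
    C.card * (Fintype.card F ^ (n - k) - 1) ≤
      (Fintype.card F ^ n - 1) * maxCodeDim F (n - 1) d k := by
  have hdual : Fintype.card (Dual F V) = Fintype.card F ^ n := by
    rw [card_eq_pow_finrank (K := F), Subspace.dual_finrank_eq, hV]
  calc C.card * (Fintype.card F ^ (n - k) - 1)
      ≤ #(univ.erase (0 : Dual F V)) * maxCodeDim F (n - 1) d k := by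
        refine card_mul_le_card_mul (fun X φ => X ≤ LinearMap.ker φ) (fun X hX => ?_)
          (fun φ hφ => ?_)
        · rw [bipartiteAbove, filter_erase, card_erase_of_mem (by simp), card_filter_le_ker,
            hV, hCk X hX]
        · have hker := Dual.finrank_ker_add_one_of_ne_zero (ne_of_mem_erase hφ)
          exact card_le_maxCodeDim_of_le (H := LinearMap.ker φ) (by omega)
            (hC.mono (filter_subset _ _)) (fun X hX => hCk X (mem_filter.1 hX).1)
            (fun X hX => (mem_filter.1 hX).2)
    _ = (Fintype.card F ^ n - 1) * maxCodeDim F (n - 1) d k := by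
        rw [card_erase_of_mem (mem_univ _), card_univ, hdual]

end DoubleCounting

lemma le_floor_div_mul_of_mul_le {M A a b : ℕ} (ha : 1 ≤ a) (hb : 1 < b)
    (h : M * (b - 1) ≤ (a - 1) * A) : M ≤ ⌊((a : ℚ) - 1) / ((b : ℚ) - 1) * A⌋₊ := by
  have hb' : (0 : ℚ) < b - 1 := sub_pos.2 (by exact_mod_cast hb)
  refine Nat.le_floor ?_
  rw [div_mul_eq_mul_div, le_div_iff₀ hb']
  have hcast := (Nat.cast_le (α := ℚ)).2 h
  push_cast [ha, hb.le] at hcast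
  linarith

/-- Johnson type bound II (hyperplane version):
A_q(v,d;k) ≤ ⌊(q^v-1)/(q^{v-k}-1) · A_q(v-1,d;k)⌋. -/
theorem johnson_bound_II_hyperplane (q v d k : ℕ) (F : Type*) [Field F] [Fintype F]
    (hF : Fintype.card F = q) (hv : 2 ≤ v) (hkv : k ≤ v - 1) :
    maxCodeDim F v d k ≤
      ⌊((q : ℚ) ^ v - 1) / ((q : ℚ) ^ (v - k) - 1) * (maxCodeDim F (v - 1) d k : ℚ)⌋₊ := by
  have hq : 1 < q := hF ▸ Fintype.one_lt_card
  have := Module.finite_of_finite F (M := Dual F (Fin v → F))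
  have : Fintype (Dual F (Fin v → F)) := Fintype.ofFinite _
  obtain ⟨C, hC, hCk, hCcard⟩ := exists_card_eq_maxCodeDim F v d k
  have hcount := card_mul_le_maxCodeDim (finrank_fin_fun F) hC hCk
  rw [hCcard, hF] at hcount
  exact_mod_cast le_floor_div_mul_of_mul_le (Nat.one_le_pow _ _ (by omega))
    (Nat.one_lt_pow (by omega) hq) hcount
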